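/- Consider the scalar case (n_i = 1, N = n). Let f satisfy Assumption 1, u satisfy Assumption 2, and let f be strongly convex. Let (x^k) be the sequence generated by the RCD-IHT algorithm, let x* be a limit point of (x^k), and let κ denote the number of changes in expectation of I^k = I(x^k) as k → ∞. Then κ · δ ≤ E[F(x⁰) − F(x*)], hence κ ≤ ⌈E[F(x⁰) − F(x*)]/δ⌉, where δ = (1/n) · min{ min_{i : λ_i > 0} μ_i λ_i / M_i, min_{j ∈ supp(x⁰)} (μ_j/2)|x⁰_{(j)}|² }. -/

import Mathlib

open scoped RealInnerProductSpace
open Finset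

/-- The weighted ℓ₀ quasinorm `‖x‖_{0,λ} = ∑ᵢ λᵢ‖xᵢ‖₀` in the scalar case. -/
noncomputable def l0s {n : ℕ} (lam : Fin n → ℝ) (x : EuclideanSpace ℝ (Fin n)) : ℝ :=
  ∑ j, if x j ≠ 0 then lam j else 0

/-- The index set `I(x) = supp(x) ∪ {j : λⱼ = 0}` in the scalar case. -/
def isetS {n : ℕ} (lam : Fin n → ℝ) (x : EuclideanSpace ℝ (Fin n)) : Set (Fin n) :=
  {j | x j ≠ 0 ∨ lam j = 0}

/-- One iteration of (RCD-IHT) in the scalar case: coordinate `i` is replaced by `T i x`. -/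
noncomputable def stepS {n : ℕ} (T : Fin n → EuclideanSpace ℝ (Fin n) → ℝ)
    (i : Fin n) (x : EuclideanSpace ℝ (Fin n)) : EuclideanSpace ℝ (Fin n) :=
  x + EuclideanSpace.single i (T i x - x i)

/-- A "change of `I(x)` in expectation" at the point `x`:
`E[|I⁺ \ I| + |I \ I⁺|] = (1/n)∑ᵢ (|I(xᵢ⁺) \ I(x)| + |I(x) \ I(xᵢ⁺)|) > 0`. -/
noncomputable def chgS {n : ℕ} (lam : Fin n → ℝ)
    (T : Fin n → EuclideanSpace ℝ (Fin n) → ℝ) (x : EuclideanSpace ℝ (Fin n)) : Prop :=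
  0 < (1 / n : ℝ) * ∑ i : Fin n,
    (((isetS lam (stepS T i x) \ isetS lam x).ncard : ℝ) +
      ((isetS lam x \ isetS lam (stepS T i x)).ncard : ℝ))

/-- Assumption 2 in the scalar case: `uᵢ(·;·) : ℝ × ℝⁿ → ℝ` with derivatives `guᵢ`,
Lipschitz constants `Mᵢ > Lᵢ` and curvature constants `μᵢ ∈ (0, Mᵢ - Lᵢ]`. -/
structure ScalarApproxAssumption {n : ℕ}
    (f : EuclideanSpace ℝ (Fin n) → ℝ)
    (g : EuclideanSpace ℝ (Fin n) → EuclideanSpace ℝ (Fin n))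
    (L : Fin n → ℝ)
    (u : Fin n → ℝ → EuclideanSpace ℝ (Fin n) → ℝ)
    (gu : Fin n → ℝ → EuclideanSpace ℝ (Fin n) → ℝ)
    (M μ : Fin n → ℝ) : Prop where
  strictConvexOn : ∀ i x, StrictConvexOn ℝ Set.univ (fun y : ℝ => u i y x)
  hasDeriv : ∀ i x y, HasDerivAt (fun w => u i w x) (gu i y x) y
  continuous_second : ∀ i y, Continuous fun x => u i y x
  value_at : ∀ i x, u i (x i) x = f x
  deriv_at : ∀ i x, gu i (x i) x = g x i
  lipschitz_deriv : ∀ i x y y', |gu i y x - gu i y' x| ≤ M i * |y - y'|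
  M_gt_L : ∀ i, L i < M i
  mu_pos : ∀ i, 0 < μ i
  mu_le : ∀ i, μ i ≤ M i - L i
  lower_bound : ∀ i x y,
    f (x + EuclideanSpace.single i (y - x i)) + μ i / 2 * (y - x i) ^ 2 ≤ u i y x

/-!
Every step decreases `F = f + ‖·‖_{0,λ}` by at least `(μᵢ/2)|x⁺ᵢ - xᵢ|²`. A nonzero value `t`
returned by the ℓ₀ proximal step is a critical point of `uᵢ(·; x)`, and since `uᵢ` has an
`Mᵢ`-Lipschitz derivative, comparing with `y = 0` gives `λᵢ ≤ Mᵢ t²/2`. Hence every penalised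
nonzero coordinate of every iterate satisfies `(μᵢ/2) xᵢ² ≥ nδ`, and whenever such a coordinate
enters or leaves the support, `F` drops by at least `nδ`. Averaging over the uniformly chosen next
coordinate, a change in expectation at step `k` costs at least `δ` of `E[F(xᵏ) - F(xᵏ⁺¹)]`;
summing and using `F(x*) ≤ F(xᵏ)` (lower semicontinuity of `F` along a nonincreasing sequence)
gives `δ E[κ] ≤ E[F(x⁰) - F(x*)]`.

`xᵏ` is a function of the first `k` coordinate choices, which take finitely many values, so all
expectations reduce to finite sums over histories.
-/

open Finset MeasureTheory Filter
open scoped ENNReal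

theorem ConvexOn.add_deriv_mul_le {h h' : ℝ → ℝ} (hconv : ConvexOn ℝ Set.univ h)
    (hh : ∀ y, HasDerivAt h (h' y) y) (a b : ℝ) : h a + h' a * (b - a) ≤ h b := by
  rcases lt_trichotomy a b with hab | rfl | hba
  · have := hconv.le_slope_of_hasDerivAt (Set.mem_univ a) (Set.mem_univ b) hab (hh a)
    rw [slope_def_field, le_div_iff₀ (sub_pos.2 hab)] at this
    linarith
  · simp
  · have := hconv.slope_le_of_hasDerivAt (Set.mem_univ b) (Set.mem_univ a) hba (hh a)
    rw [slope_def_field, div_le_iff₀ (sub_pos.2 hba)] at this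
    linarith

theorem le_add_deriv_mul_add_sq_of_abs_deriv_sub_le {φ φ' : ℝ → ℝ} {K : ℝ}
    (hφ : ∀ y, HasDerivAt φ (φ' y) y) (hK : ∀ y y', |φ' y - φ' y'| ≤ K * |y - y'|)
    (a b : ℝ) :
    φ b ≤ φ a + φ' a * (b - a) + K / 2 * (b - a) ^ 2 := by
  -- `K/2 y² - φ y` has monotone derivative, hence is convex.
  have hderiv : ∀ y, HasDerivAt (fun y => K / 2 * y ^ 2 - φ y) (K * y - φ' y) y := fun y => by
    refine (((hasDerivAt_pow 2 y).const_mul (K / 2)).sub (hφ y)).congr_deriv ?_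
    norm_num
    ring
  have hmono : Monotone fun y => K * y - φ' y := fun y y' hyy' => by
    have := (le_abs_self _).trans (hK y' y)
    rw [abs_of_nonneg (sub_nonneg.2 hyy')] at this
    dsimp only
    linarith
  have hconv : ConvexOn ℝ Set.univ fun y => K / 2 * y ^ 2 - φ y :=
    Monotone.convexOn_univ_of_deriv (fun y => (hderiv y).differentiableAt)
      (by rwa [funext fun y => (hderiv y).deriv])
  have := hconv.add_deriv_mul_le hderiv a b
  linarith

theorem sub_norm_sq_div_le_of_strongly_convex {E : Type*} [NormedAddCommGroup E]
    [InnerProductSpace ℝ E] {f : E → ℝ} {x₀ g : E} {σ : ℝ} (hσ : 0 < σ)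
    (hf : ∀ y, f x₀ + ⟪g, y - x₀⟫ + σ / 2 * ‖y - x₀‖ ^ 2 ≤ f y) (y : E) :
    f x₀ - ‖g‖ ^ 2 / (2 * σ) ≤ f y := by
  have hinner : -(‖g‖ * ‖y - x₀‖) ≤ ⟪g, y - x₀⟫ :=
    (neg_le_neg (abs_real_inner_le_norm g _)).trans (neg_abs_le _)
  have hsq : ‖g‖ ^ 2 / (2 * σ) + σ / 2 * ‖y - x₀‖ ^ 2 - ‖g‖ * ‖y - x₀‖
      = (‖g‖ - σ * ‖y - x₀‖) ^ 2 / (2 * σ) := by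
    field_simp; ring
  have : 0 ≤ (‖g‖ - σ * ‖y - x₀‖) ^ 2 / (2 * σ) := by positivity
  linarith [hf y]

theorem LowerSemicontinuous.le_of_mapClusterPt_of_antitone {X : Type*} [TopologicalSpace X]
    {F : X → ℝ} (hF : LowerSemicontinuous F) {xs : ℕ → X} (hanti : Antitone (F ∘ xs))
    {x : X} (hx : MapClusterPt x atTop xs) (k : ℕ) : F x ≤ F (xs k) := by
  by_contra! hlt
  obtain ⟨m, hkm, hm⟩ := frequently_atTop.1
    (mapClusterPt_iff_frequently.1 hx _ (hF x _ hlt)) k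
  exact (hanti hkm).not_gt hm

theorem Fintype.sum_fin_succ_pi_eq_sum_snoc {α : Type*} [Fintype α] {k : ℕ}
    (q : (Fin (k + 1) → α) → ℝ) :
    ∑ v, q v = ∑ w : Fin k → α, ∑ i, q (Fin.snoc w i) := by
  rw [← (Fin.snocEquiv fun _ => α).sum_comp, Fintype.sum_prod_type, Finset.sum_comm]
  rfl

theorem integral_ncard_le_of_sum_measureReal_le {Ω : Type*} [MeasurableSpace Ω] {P : Measure Ω}
    [IsFiniteMeasure P] {s : ℕ → Set Ω} (hs : ∀ k, MeasurableSet (s k)) {N : Ω → ℕ}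
    (hN : ∀ ω, N ω = {k | ω ∈ s k}.ncard) (hNm : Measurable N) {C : ℝ}
    (hC : ∀ K, ∑ k ∈ range K, P.real (s k) ≤ C) : ∫ ω, (N ω : ℝ) ∂P ≤ C := by
  have hpoint : ∀ ω, (N ω : ℝ≥0∞) ≤ ∑' k, (s k).indicator 1 ω := fun ω => by
    rw [hN]
    by_cases hfin : {k | ω ∈ s k}.Finite
    · rw [Set.ncard_eq_toFinset_card _ hfin, Finset.card_eq_sum_ones, Nat.cast_sum, Nat.cast_one]
      refine (Finset.sum_le_sum fun k hk => ?_).trans (ENNReal.sum_le_tsum _)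
      rw [Set.indicator_of_mem (show ω ∈ s k from hfin.mem_toFinset.1 hk), Pi.one_apply]
    · simp [Set.Infinite.ncard hfin]
  have hlint : ∫⁻ ω, (N ω : ℝ≥0∞) ∂P ≤ ENNReal.ofReal C := calc
    _ ≤ ∫⁻ ω, ∑' k, (s k).indicator 1 ω ∂P := lintegral_mono hpoint
    _ = ∑' k, P (s k) := by
      rw [lintegral_tsum fun k => (measurable_one.indicator (hs k)).aemeasurable]
      simp [lintegral_indicator_one (hs _)]
    _ ≤ ENNReal.ofReal C := ENNReal.tsum_le_of_sum_range_le fun K => by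
      rw [← ENNReal.ofReal_toReal (ENNReal.sum_ne_top.2 fun k _ => measure_ne_top P (s k)),
        ENNReal.toReal_sum fun k _ => measure_ne_top P _]
      exact ENNReal.ofReal_le_ofReal (hC K)
  have hNm' : Measurable fun ω => (N ω : ℝ) := measurable_from_top.comp hNm
  rw [integral_eq_lintegral_of_nonneg_ae (Eventually.of_forall fun ω => by positivity)
    hNm'.aestronglyMeasurable]
  simp_rw [ENNReal.ofReal_natCast]
  exact ENNReal.toReal_le_of_le_ofReal (by simpa using hC 0) hlint

section Deterministic

variable {n : ℕ} {lam : Fin n → ℝ} {f : EuclideanSpace ℝ (Fin n) → ℝ}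
  {g : EuclideanSpace ℝ (Fin n) → EuclideanSpace ℝ (Fin n)} {L M μ : Fin n → ℝ}
  {u gu : Fin n → ℝ → EuclideanSpace ℝ (Fin n) → ℝ}
  {T : Fin n → EuclideanSpace ℝ (Fin n) → ℝ}

/-- `F = f + ‖·‖_{0,λ}`. -/
noncomputable def objective (lam : Fin n → ℝ) (f : EuclideanSpace ℝ (Fin n) → ℝ)
    (x : EuclideanSpace ℝ (Fin n)) : ℝ :=
  f x + l0s lam x

/-- `T = T^u`: `T i x` minimises `uᵢ(·; x) + λᵢ‖·‖₀`. -/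
def IsL0ProxMap (lam : Fin n → ℝ) (u : Fin n → ℝ → EuclideanSpace ℝ (Fin n) → ℝ)
    (T : Fin n → EuclideanSpace ℝ (Fin n) → ℝ) : Prop :=
  ∀ i x y, u i (T i x) x + lam i * (if T i x ≠ 0 then (1 : ℝ) else 0)
    ≤ u i y x + lam i * (if y ≠ 0 then (1 : ℝ) else 0)

lemma stepS_apply (i : Fin n) (x : EuclideanSpace ℝ (Fin n)) (j : Fin n) :
    stepS T i x j = if j = i then T i x else x j := by
  by_cases hji : j = i
  · subst hji; simp [stepS]
  · simp [stepS, hji]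

lemma l0s_nonneg (hlam : ∀ i, 0 ≤ lam i) (x : EuclideanSpace ℝ (Fin n)) : 0 ≤ l0s lam x :=
  sum_nonneg fun j _ => by split_ifs <;> simp [hlam j]

lemma lowerSemicontinuous_l0s (hlam : ∀ i, 0 ≤ lam i) : LowerSemicontinuous (l0s lam) := by
  refine lowerSemicontinuous_sum fun j _ => ?_
  have hopen : IsOpen {x : EuclideanSpace ℝ (Fin n) | x j ≠ 0} :=
    isOpen_compl_singleton.preimage (EuclideanSpace.proj j).continuous
  have hind : {x : EuclideanSpace ℝ (Fin n) | x j ≠ 0}.indicator (fun _ => lam j)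
      = fun x => if x j ≠ 0 then lam j else 0 :=
    funext fun x => by simp [Set.indicator_apply]
  exact hind ▸ hopen.lowerSemicontinuous_indicator (hlam j)

lemma l0s_stepS (i : Fin n) (x : EuclideanSpace ℝ (Fin n)) :
    l0s lam (stepS T i x) + lam i * (if x i ≠ 0 then (1 : ℝ) else 0)
      = l0s lam x + lam i * (if T i x ≠ 0 then (1 : ℝ) else 0) := by
  simp only [l0s, ← add_sum_erase _ _ (mem_univ i), stepS_apply]
  rw [sum_congr rfl fun j hj => by rw [if_neg (ne_of_mem_erase hj)]]
  split_ifs <;> ring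

lemma objective_stepS_add_sq_le (hu : ScalarApproxAssumption f g L u gu M μ)
    (hT : IsL0ProxMap lam u T) (i : Fin n) (x : EuclideanSpace ℝ (Fin n)) :
    objective lam f (stepS T i x) + μ i / 2 * (T i x - x i) ^ 2 ≤ objective lam f x := by
  have hprox := hT i x (x i)
  rw [hu.value_at] at hprox
  have := hu.lower_bound i x (T i x)
  have := l0s_stepS (lam := lam) (T := T) i x
  simp only [objective, stepS] at *
  linarith

lemma objective_stepS_le (hu : ScalarApproxAssumption f g L u gu M μ)
    (hT : IsL0ProxMap lam u T) (i : Fin n) (x : EuclideanSpace ℝ (Fin n)) :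
    objective lam f (stepS T i x) ≤ objective lam f x := by
  have := objective_stepS_add_sq_le hu hT i x
  nlinarith [hu.mu_pos i, sq_nonneg (T i x - x i)]

lemma lam_le_of_T_ne_zero (hu : ScalarApproxAssumption f g L u gu M μ)
    (hT : IsL0ProxMap lam u T) {i : Fin n} {x : EuclideanSpace ℝ (Fin n)} (ht : T i x ≠ 0) :
    lam i ≤ M i / 2 * T i x ^ 2 := by
  -- Away from `0` the penalty is constant, so `T i x` is a critical point of `uᵢ(·; x)`.
  have hmin : IsLocalMin (fun y => u i y x) (T i x) := by
    filter_upwards [isOpen_compl_singleton.mem_nhds ht] with y hy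
    simpa [ht, show y ≠ 0 from hy] using hT i x y
  have hcrit : gu i (T i x) x = 0 := hmin.hasDerivAt_eq_zero (hu.hasDeriv i x _)
  have hquad := le_add_deriv_mul_add_sq_of_abs_deriv_sub_le (hu.hasDeriv i x)
    (hu.lipschitz_deriv i x) (T i x) 0
  have hzero := hT i x 0
  simp only [ne_eq, ht, not_false_eq_true, if_true, not_true_eq_false, if_false] at hzero
  rw [hcrit] at hquad
  nlinarith

/-- The set whose infimum is `n δ`. -/
def gapSet (lam M μ : Fin n → ℝ) (x0 : EuclideanSpace ℝ (Fin n)) : Set ℝ :=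
  {t | ∃ i, 0 < lam i ∧ t = μ i * lam i / M i} ∪
    {t | ∃ j, x0 j ≠ 0 ∧ t = μ j / 2 * x0 j ^ 2}

lemma gapSet_finite (lam M μ : Fin n → ℝ) (x0 : EuclideanSpace ℝ (Fin n)) :
    (gapSet lam M μ x0).Finite := by
  refine ((Set.finite_range fun i => μ i * lam i / M i).union
    (Set.finite_range fun j => μ j / 2 * x0 j ^ 2)).subset ?_
  rintro t (⟨i, -, rfl⟩ | ⟨j, -, rfl⟩)
  exacts [Or.inl ⟨i, rfl⟩, Or.inr ⟨j, rfl⟩]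

lemma sInf_gapSet_pos (hu : ScalarApproxAssumption f g L u gu M μ) (hL : ∀ i, 0 < L i)
    (hlam_pos : ∃ i, 0 < lam i) (x0 : EuclideanSpace ℝ (Fin n)) :
    0 < sInf (gapSet lam M μ x0) := by
  obtain ⟨i, hi⟩ := hlam_pos
  obtain ⟨j, hj, heq⟩ | ⟨j, hj, heq⟩ :=
    Set.Nonempty.csInf_mem (⟨_, Or.inl ⟨i, hi, rfl⟩⟩ : (gapSet lam M μ x0).Nonempty)
      (gapSet_finite lam M μ x0) <;> rw [heq]
  · exact div_pos (mul_pos (hu.mu_pos j) hj) ((hL j).trans (hu.M_gt_L j))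
  · exact mul_pos (half_pos (hu.mu_pos j)) (by positivity)

def LargeSupport (lam μ : Fin n → ℝ) (c : ℝ) (x : EuclideanSpace ℝ (Fin n)) : Prop :=
  ∀ j, 0 < lam j → x j ≠ 0 → c ≤ μ j / 2 * x j ^ 2

lemma largeSupport_sInf_gapSet (lam M μ : Fin n → ℝ) (x0 : EuclideanSpace ℝ (Fin n)) :
    LargeSupport lam μ (sInf (gapSet lam M μ x0)) x0 := fun j _ hj =>
  csInf_le (gapSet_finite lam M μ x0).bddBelow (Or.inr ⟨j, hj, rfl⟩)

lemma sInf_gapSet_le_of_T_ne_zero (hu : ScalarApproxAssumption f g L u gu M μ)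
    (hL : ∀ i, 0 < L i) (hT : IsL0ProxMap lam u T) (x0 : EuclideanSpace ℝ (Fin n))
    {i : Fin n} (hi : 0 < lam i) {x : EuclideanSpace ℝ (Fin n)} (ht : T i x ≠ 0) :
    sInf (gapSet lam M μ x0) ≤ μ i / 2 * T i x ^ 2 := by
  have hM : 0 < M i := (hL i).trans (hu.M_gt_L i)
  calc sInf (gapSet lam M μ x0) ≤ μ i * lam i / M i :=
        csInf_le (gapSet_finite lam M μ x0).bddBelow (Or.inl ⟨i, hi, rfl⟩)
    _ ≤ μ i * (M i / 2 * T i x ^ 2) / M i := by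
        gcongr
        · exact (hu.mu_pos i).le
        · exact lam_le_of_T_ne_zero hu hT ht
    _ = μ i / 2 * T i x ^ 2 := by field_simp

lemma LargeSupport.stepS (hu : ScalarApproxAssumption f g L u gu M μ) (hL : ∀ i, 0 < L i)
    (hT : IsL0ProxMap lam u T) {x0 x : EuclideanSpace ℝ (Fin n)}
    (hx : LargeSupport lam μ (sInf (gapSet lam M μ x0)) x) (i : Fin n) :
    LargeSupport lam μ (sInf (gapSet lam M μ x0)) (stepS T i x) := by
  intro j hj hxj
  rw [stepS_apply] at hxj ⊢
  split_ifs at hxj ⊢ with hji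
  · subst hji
    exact sInf_gapSet_le_of_T_ne_zero hu hL hT x0 hj hxj
  · exact hx j hj hxj

lemma isetS_stepS_eq_of_mem_iff {i : Fin n} {x : EuclideanSpace ℝ (Fin n)}
    (hi : i ∈ isetS lam (stepS T i x) ↔ i ∈ isetS lam x) :
    isetS lam (stepS T i x) = isetS lam x := by
  ext j
  by_cases hji : j = i
  · subst hji; exact hi
  · simp [isetS, stepS_apply, hji]

lemma exists_support_change_of_chgS (hlam : ∀ i, 0 ≤ lam i) {x : EuclideanSpace ℝ (Fin n)}
    (hchg : chgS lam T x) : ∃ i, 0 < lam i ∧ (x i = 0 ↔ T i x ≠ 0) := by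
  by_contra! hnone
  have hsame : ∀ i, isetS lam (stepS T i x) = isetS lam x := fun i =>
    isetS_stepS_eq_of_mem_iff <| by
      rcases (hlam i).lt_or_eq with hi | hi
      · have := hnone i hi
        simp only [isetS, Set.mem_ofPred_eq, stepS_apply, hi.ne', or_false]
        tauto
      · simp [isetS, ← hi]
  simp [chgS, hsame] at hchg

lemma sInf_gapSet_le_objective_sub_stepS (hu : ScalarApproxAssumption f g L u gu M μ)
    (hL : ∀ i, 0 < L i) (hT : IsL0ProxMap lam u T) {x0 x : EuclideanSpace ℝ (Fin n)}
    (hx : LargeSupport lam μ (sInf (gapSet lam M μ x0)) x) {i : Fin n} (hi : 0 < lam i)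
    (hchange : x i = 0 ↔ T i x ≠ 0) :
    sInf (gapSet lam M μ x0) ≤ objective lam f x - objective lam f (stepS T i x) := by
  have hdescent := objective_stepS_add_sq_le hu hT i x
  by_cases hxi : x i = 0
  · have hgap := sInf_gapSet_le_of_T_ne_zero hu hL hT x0 hi (hchange.1 hxi)
    rw [hxi, sub_zero] at hdescent
    linarith
  · have hgap := hx i hi hxi
    have hti : T i x = 0 := not_not.1 (mt hchange.2 hxi)
    rw [hti, zero_sub, neg_sq] at hdescent
    linarith

lemma indicator_chgS_sInf_gapSet_le_sum (hlam : ∀ i, 0 ≤ lam i)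
    (hu : ScalarApproxAssumption f g L u gu M μ) (hL : ∀ i, 0 < L i) (hT : IsL0ProxMap lam u T)
    {x0 x : EuclideanSpace ℝ (Fin n)} (hx : LargeSupport lam μ (sInf (gapSet lam M μ x0)) x) :
    {y | chgS lam T y}.indicator (fun _ => sInf (gapSet lam M μ x0)) x
      ≤ ∑ i, (objective lam f x - objective lam f (stepS T i x)) := by
  have hdecr : ∀ i, 0 ≤ objective lam f x - objective lam f (stepS T i x) := fun i =>
    sub_nonneg.2 (objective_stepS_le hu hT i x)
  by_cases hchg : chgS lam T x
  · obtain ⟨i, hi, hchange⟩ := exists_support_change_of_chgS hlam hchg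
    rw [Set.indicator_of_mem (show x ∈ {y | chgS lam T y} from hchg)]
    exact (sInf_gapSet_le_objective_sub_stepS hu hL hT hx hi hchange).trans
      (single_le_sum (fun j _ => hdecr j) (mem_univ i))
  · rw [Set.indicator_of_notMem (show x ∉ {y | chgS lam T y} from hchg)]
    exact sum_nonneg fun i _ => hdecr i

lemma objective_le_of_mapClusterPt (hu : ScalarApproxAssumption f g L u gu M μ)
    (hT : IsL0ProxMap lam u T) (hF : LowerSemicontinuous (objective lam f))
    {xs : ℕ → EuclideanSpace ℝ (Fin n)} {i : ℕ → Fin n}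
    (hxs : ∀ k, xs (k + 1) = stepS T (i k) (xs k)) {x : EuclideanSpace ℝ (Fin n)}
    (hx : MapClusterPt x atTop xs) (k : ℕ) : objective lam f x ≤ objective lam f (xs k) :=
  hF.le_of_mapClusterPt_of_antitone (antitone_nat_of_succ_le fun k => by
    simpa only [Function.comp_apply, hxs] using objective_stepS_le hu hT _ _) hx k

end Deterministic

section Random

variable {n : ℕ} {Ω : Type*} {ik : ℕ → Ω → Fin n}

def history (ik : ℕ → Ω → Fin n) (k : ℕ) (ω : Ω) : Fin k → Fin n := fun j => ik j ω

noncomputable def iterOfHistory (T : Fin n → EuclideanSpace ℝ (Fin n) → ℝ)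
    (x0 : EuclideanSpace ℝ (Fin n)) :
    (k : ℕ) → (Fin k → Fin n) → EuclideanSpace ℝ (Fin n)
  | 0, _ => x0
  | k + 1, v => stepS T (v (Fin.last k)) (iterOfHistory T x0 k (Fin.init v))

lemma iterOfHistory_snoc (T : Fin n → EuclideanSpace ℝ (Fin n) → ℝ)
    (x0 : EuclideanSpace ℝ (Fin n)) (k : ℕ) (w : Fin k → Fin n) (i : Fin n) :
    iterOfHistory T x0 (k + 1) (Fin.snoc w i) = stepS T i (iterOfHistory T x0 k w) := by
  simp [iterOfHistory, Fin.init_snoc]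

lemma eq_iterOfHistory {T : Fin n → EuclideanSpace ℝ (Fin n) → ℝ}
    {x0 : EuclideanSpace ℝ (Fin n)} {X : ℕ → Ω → EuclideanSpace ℝ (Fin n)}
    (hX0 : ∀ ω, X 0 ω = x0) (hXstep : ∀ k ω, X (k + 1) ω = stepS T (ik k ω) (X k ω))
    (k : ℕ) (ω : Ω) : X k ω = iterOfHistory T x0 k (history ik k ω) := by
  induction k with
  | zero => exact hX0 ω
  | succ k ih => rw [hXstep, ih]; rfl

variable [MeasurableSpace Ω] {P : Measure Ω}

lemma measurable_history (hmeas : ∀ k, Measurable (ik k)) (k : ℕ) :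
    Measurable (history ik k) :=
  measurable_pi_lambda _ fun j => hmeas j

lemma measure_history_eq (hindep : ProbabilityTheory.iIndepFun ik P)
    (hunif : ∀ k i, P {ω | ik k ω = i} = (n : ℝ≥0∞)⁻¹) (k : ℕ)
    (v : Fin k → Fin n) :
    P (history ik k ⁻¹' {v}) = (n : ℝ≥0∞)⁻¹ ^ k := by
  have hpre : history ik k ⁻¹' {v} = ⋂ j : Fin k, (fun ω => ik j ω) ⁻¹' {v j} := by
    ext ω
    simp [history, funext_iff]
  rw [hpre, (hindep.precomp Fin.val_injective).meas_iInter
    fun j => ⟨{v j}, measurableSet_singleton _, rfl⟩]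
  simp [Set.preimage, hunif]

lemma integral_comp_history [IsProbabilityMeasure P] (hmeas : ∀ k, Measurable (ik k))
    (hindep : ProbabilityTheory.iIndepFun ik P)
    (hunif : ∀ k i, P {ω | ik k ω = i} = (n : ℝ≥0∞)⁻¹) (k : ℕ)
    (q : (Fin k → Fin n) → ℝ) :
    ∫ ω, q (history ik k ω) ∂P = (n : ℝ)⁻¹ ^ k * ∑ v, q v := by
  rw [← integral_map (measurable_history hmeas k).aemeasurable
    (Measurable.of_discrete).aestronglyMeasurable, integral_fintype Integrable.of_finite,
    mul_sum]
  refine sum_congr rfl fun v _ => ?_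
  rw [measureReal_def, Measure.map_apply (measurable_history hmeas k) (measurableSet_singleton v),
    measure_history_eq hindep hunif, smul_eq_mul]
  simp

lemma integrable_comp_history [IsProbabilityMeasure P] (hmeas : ∀ k, Measurable (ik k)) (k : ℕ)
    (q : (Fin k → Fin n) → ℝ) : Integrable (fun ω => q (history ik k ω)) P :=
  Integrable.of_finite.comp_measurable (measurable_history hmeas k)

end Random

section Expectation

variable {n : ℕ} {lam : Fin n → ℝ} {f : EuclideanSpace ℝ (Fin n) → ℝ}
  {g : EuclideanSpace ℝ (Fin n) → EuclideanSpace ℝ (Fin n)} {L M μ : Fin n → ℝ}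
  {u gu : Fin n → ℝ → EuclideanSpace ℝ (Fin n) → ℝ}
  {T : Fin n → EuclideanSpace ℝ (Fin n) → ℝ}
  {Ω : Type*} [MeasurableSpace Ω] {P : Measure Ω} [IsProbabilityMeasure P]
  {ik : ℕ → Ω → Fin n}
  {x0 : EuclideanSpace ℝ (Fin n)} {X : ℕ → Ω → EuclideanSpace ℝ (Fin n)}

lemma largeSupport_iterOfHistory (hu : ScalarApproxAssumption f g L u gu M μ)
    (hL : ∀ i, 0 < L i) (hT : IsL0ProxMap lam u T) (x0 : EuclideanSpace ℝ (Fin n)) :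
    ∀ k w, LargeSupport lam μ (sInf (gapSet lam M μ x0)) (iterOfHistory T x0 k w)
  | 0, _ => largeSupport_sInf_gapSet lam M μ x0
  | k + 1, _ => (largeSupport_iterOfHistory hu hL hT x0 k _).stepS hu hL hT _

lemma inv_natCast_mul_sInf_gapSet_mul_measureReal_le (hlam : ∀ i, 0 ≤ lam i)
    (hu : ScalarApproxAssumption f g L u gu M μ) (hL : ∀ i, 0 < L i) (hT : IsL0ProxMap lam u T)
    (hmeas : ∀ k, Measurable (ik k)) (hindep : ProbabilityTheory.iIndepFun ik P)
    (hunif : ∀ k i, P {ω | ik k ω = i} = (n : ℝ≥0∞)⁻¹)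
    (hX0 : ∀ ω, X 0 ω = x0) (hXstep : ∀ k ω, X (k + 1) ω = stepS T (ik k ω) (X k ω))
    (k : ℕ) :
    (n : ℝ)⁻¹ * sInf (gapSet lam M μ x0) * P.real {ω | chgS lam T (X k ω)}
      ≤ ∫ ω, (objective lam f (X k ω) - objective lam f (X (k + 1) ω)) ∂P := by
  set c := sInf (gapSet lam M μ x0)
  set S := {w : Fin k → Fin n | chgS lam T (iterOfHistory T x0 k w)}
  let decrease : (Fin (k + 1) → Fin n) → ℝ := fun v =>
    objective lam f (iterOfHistory T x0 k (Fin.init v))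
      - objective lam f (iterOfHistory T x0 (k + 1) v)
  -- `X k` is a function of the first `k` choices and the next choice is uniform and independent
  -- of them, so both sides are averages over histories.
  simp_rw [eq_iterOfHistory hX0 hXstep]
  have hprob : P.real (history ik k ⁻¹' S) = ∫ ω, S.indicator 1 (history ik k ω) ∂P := by
    rw [← integral_indicator_one ((measurable_history hmeas k) (Set.toFinite S).measurableSet)]
    rfl
  calc (n : ℝ)⁻¹ * c * P.real (history ik k ⁻¹' S)
      = (n : ℝ)⁻¹ ^ (k + 1) * ∑ w, S.indicator (fun _ => c) w := by
        rw [hprob, integral_comp_history hmeas hindep hunif, pow_succ, mul_sum, mul_sum, mul_sum]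
        refine sum_congr rfl fun w _ => ?_
        by_cases hw : w ∈ S <;> simp [hw]
        ring
    _ ≤ (n : ℝ)⁻¹ ^ (k + 1) * ∑ w, ∑ i, decrease (Fin.snoc w i) := by
        gcongr with w
        simp only [decrease, Fin.init_snoc, iterOfHistory_snoc]
        exact indicator_chgS_sInf_gapSet_le_sum hlam hu hL hT
          (largeSupport_iterOfHistory hu hL hT x0 k w)
    _ = ∫ ω, decrease (history ik (k + 1) ω) ∂P := by
        rw [integral_comp_history hmeas hindep hunif, Fintype.sum_fin_succ_pi_eq_sum_snoc]

lemma measurable_comp_iterate (hmeas : ∀ k, Measurable (ik k)) (hX0 : ∀ ω, X 0 ω = x0)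
    (hXstep : ∀ k ω, X (k + 1) ω = stepS T (ik k ω) (X k ω)) {β : Type*} [MeasurableSpace β]
    (φ : EuclideanSpace ℝ (Fin n) → β) (k : ℕ) : Measurable fun ω => φ (X k ω) := by
  simp_rw [eq_iterOfHistory hX0 hXstep]
  exact (Measurable.of_discrete (f := fun w => φ (iterOfHistory T x0 k w))).comp
    (measurable_history hmeas k)

lemma integrable_comp_iterate (hmeas : ∀ k, Measurable (ik k)) (hX0 : ∀ ω, X 0 ω = x0)
    (hXstep : ∀ k ω, X (k + 1) ω = stepS T (ik k ω) (X k ω))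
    (φ : EuclideanSpace ℝ (Fin n) → ℝ) (k : ℕ) : Integrable (fun ω => φ (X k ω)) P := by
  simp_rw [eq_iterOfHistory hX0 hXstep]
  exact integrable_comp_history hmeas k fun w => φ (iterOfHistory T x0 k w)

lemma inv_natCast_mul_sInf_gapSet_mul_sum_le (hlam : ∀ i, 0 ≤ lam i)
    (hu : ScalarApproxAssumption f g L u gu M μ) (hL : ∀ i, 0 < L i) (hT : IsL0ProxMap lam u T)
    (hmeas : ∀ k, Measurable (ik k)) (hindep : ProbabilityTheory.iIndepFun ik P)
    (hunif : ∀ k i, P {ω | ik k ω = i} = (n : ℝ≥0∞)⁻¹)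
    (hX0 : ∀ ω, X 0 ω = x0) (hXstep : ∀ k ω, X (k + 1) ω = stepS T (ik k ω) (X k ω))
    (K : ℕ) :
    (n : ℝ)⁻¹ * sInf (gapSet lam M μ x0) *
        ∑ k ∈ range K, P.real {ω | chgS lam T (X k ω)}
      ≤ ∫ ω, (objective lam f x0 - objective lam f (X K ω)) ∂P := by
  have hint := integrable_comp_iterate (P := P) hmeas hX0 hXstep (objective lam f)
  calc _ = ∑ k ∈ range K,
          (n : ℝ)⁻¹ * sInf (gapSet lam M μ x0) * P.real {ω | chgS lam T (X k ω)} :=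
        mul_sum ..
    _ ≤ ∑ k ∈ range K,
          ∫ ω, (objective lam f (X k ω) - objective lam f (X (k + 1) ω)) ∂P :=
        sum_le_sum fun k _ => inv_natCast_mul_sInf_gapSet_mul_measureReal_le hlam hu hL hT hmeas
          hindep hunif hX0 hXstep k
    _ = ∫ ω, (objective lam f x0 - objective lam f (X K ω)) ∂P := by
        rw [← integral_finsetSum (f := fun k ω => objective lam f (X k ω)
          - objective lam f (X (k + 1) ω)) _ fun k _ => (hint k).sub (hint (k + 1))]
        simp_rw [sum_range_sub', hX0]

lemma integrable_objective_sub (hlam : ∀ i, 0 ≤ lam i) {σ : ℝ} (hσ : 0 < σ)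
    (hstrong : ∀ y, f x0 + ⟪g x0, y - x0⟫ + σ / 2 * ‖y - x0‖ ^ 2 ≤ f y)
    (hF : Measurable (objective lam f)) {xstar : Ω → EuclideanSpace ℝ (Fin n)}
    (hxstar : Measurable xstar)
    (hle : ∀ᵐ ω ∂P, objective lam f (xstar ω) ≤ objective lam f x0) :
    Integrable (fun ω => objective lam f x0 - objective lam f (xstar ω)) P := by
  refine Integrable.of_bound (measurable_const.sub (hF.comp hxstar)).aestronglyMeasurable
    (objective lam f x0 - (f x0 - ‖g x0‖ ^ 2 / (2 * σ))) ?_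
  filter_upwards [hle] with ω hω
  have := sub_norm_sq_div_le_of_strongly_convex hσ hstrong (xstar ω)
  have := l0s_nonneg hlam (xstar ω)
  rw [Real.norm_eq_abs, abs_le]
  unfold objective at *
  constructor <;> linarith

end Expectation

open MeasureTheory Filter in
theorem statement17_general {n : ℕ} (lam : Fin n → ℝ)
    (hlam : ∀ i, 0 ≤ lam i) (hlam_pos : ∃ i, 0 < lam i)
    (f : EuclideanSpace ℝ (Fin n) → ℝ)
    (g : EuclideanSpace ℝ (Fin n) → EuclideanSpace ℝ (Fin n))
    (hgrad : ∀ x, HasGradientAt f (g x) x)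
    (L : Fin n → ℝ) (hL : ∀ i, 0 < L i)
    -- strong convexity of `f` with parameter `σ`
    (σ : ℝ) (hσ : 0 < σ)
    (hstrong : ∀ x y : EuclideanSpace ℝ (Fin n),
      f x + ⟪g x, y - x⟫ + σ / 2 * ‖y - x‖ ^ 2 ≤ f y)
    (u : Fin n → ℝ → EuclideanSpace ℝ (Fin n) → ℝ)
    (gu : Fin n → ℝ → EuclideanSpace ℝ (Fin n) → ℝ)
    (M μ : Fin n → ℝ)
    (hu : ScalarApproxAssumption f g L u gu M μ)
    (T : Fin n → EuclideanSpace ℝ (Fin n) → ℝ)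
    (hT : ∀ (i : Fin n) (x : EuclideanSpace ℝ (Fin n)) (y : ℝ),
      u i (T i x) x + lam i * (if T i x ≠ 0 then (1:ℝ) else 0)
        ≤ u i y x + lam i * (if y ≠ 0 then (1:ℝ) else 0))
    -- probability space and i.i.d. uniform coordinate selections
    {Ω : Type*} [MeasurableSpace Ω] (P : Measure Ω) [IsProbabilityMeasure P]
    (ik : ℕ → Ω → Fin n) (hmeas : ∀ k, Measurable (ik k))
    (hindep : ProbabilityTheory.iIndepFun ik P)
    (hunif : ∀ (k : ℕ) (i : Fin n), P {ω | ik k ω = i} = (n : ENNReal)⁻¹)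
    -- the (RCD-IHT) process
    (x0 : EuclideanSpace ℝ (Fin n)) (X : ℕ → Ω → EuclideanSpace ℝ (Fin n))
    (hX0 : ∀ ω, X 0 ω = x0)
    (hXstep : ∀ (k : ℕ) (ω : Ω), X (k + 1) ω = stepS T (ik k ω) (X k ω))
    -- the number of changes in expectation of `Iᵏ`
    (κ : Ω → ℕ) (hκ : ∀ ω, κ ω = Set.ncard {k : ℕ | chgS lam T (X k ω)})
    (hκmeas : Measurable κ)
    -- a limit point `x*` of the sequence
    (xstar : Ω → EuclideanSpace ℝ (Fin n)) (hxstarmeas : Measurable xstar)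
    (hxstar : ∀ᵐ ω ∂P, MapClusterPt (xstar ω) atTop (fun k => X k ω))
    (δ : ℝ)
    (hδ : δ = (1 / n : ℝ) * sInf
      ({t : ℝ | ∃ i, 0 < lam i ∧ t = μ i * lam i / M i} ∪
       {t : ℝ | ∃ j, x0 j ≠ 0 ∧ t = μ j / 2 * (x0 j) ^ 2})) :
    δ * ∫ ω, (κ ω : ℝ) ∂P ≤
        ∫ ω, ((f x0 + l0s lam x0) - (f (xstar ω) + l0s lam (xstar ω))) ∂P ∧
    ∫ ω, (κ ω : ℝ) ∂P ≤
      (⌈(∫ ω, ((f x0 + l0s lam x0) - (f (xstar ω) + l0s lam (xstar ω))) ∂P) / δ⌉₊ : ℝ) := by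
  have hδ' : δ = (n : ℝ)⁻¹ * sInf (gapSet lam M μ x0) := by rw [hδ, one_div]; rfl
  have hδpos : 0 < δ := by
    have := sInf_gapSet_pos hu hL hlam_pos x0
    have : 0 < n := by obtain ⟨i, -⟩ := hlam_pos; exact i.pos
    rw [hδ']; positivity
  have hf : Continuous f :=
    continuous_iff_continuousAt.2 fun x => (hgrad x).hasFDerivAt.continuousAt
  have hF : LowerSemicontinuous (objective lam f) :=
    hf.lowerSemicontinuous.add (lowerSemicontinuous_l0s hlam)
  have hstar : ∀ᵐ ω ∂P, ∀ k, objective lam f (xstar ω) ≤ objective lam f (X k ω) := by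
    filter_upwards [hxstar] with ω hω k
    exact objective_le_of_mapClusterPt hu hT hF (fun k => hXstep k ω) hω k
  have hsum : ∀ K, ∑ k ∈ range K, P.real {ω | chgS lam T (X k ω)}
      ≤ (∫ ω, ((f x0 + l0s lam x0) - (f (xstar ω) + l0s lam (xstar ω))) ∂P) / δ := by
    intro K
    rw [le_div_iff₀' hδpos, hδ']
    refine (inv_natCast_mul_sInf_gapSet_mul_sum_le hlam hu hL hT hmeas hindep hunif hX0 hXstep
      K).trans (integral_mono_ae
        ((integrable_const _).sub (integrable_comp_iterate hmeas hX0 hXstep _ K))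
        (integrable_objective_sub hlam hσ (hstrong x0) hF.measurable hxstarmeas
          (hstar.mono fun ω hω => hX0 ω ▸ hω 0)) ?_)
    filter_upwards [hstar] with ω hω
    exact sub_le_sub_left (hω K) _
  have hκ_le := integral_ncard_le_of_sum_measureReal_le
    (fun k => measurableSet_setOfPred.2 (measurable_comp_iterate hmeas hX0 hXstep (chgS lam T) k))
    hκ hκmeas hsum
  exact ⟨by rwa [le_div_iff₀' hδpos] at hκ_le, hκ_le.trans (Nat.le_ceil _)⟩

open MeasureTheory Filter in
/-- In the scalar strongly convex case, the (expected) number `κ` of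
changes in expectation of `Iᵏ` satisfies `κ·δ ≤ E[F(x⁰) - F(x*)]`, hence
`κ ≤ ⌈E[F(x⁰) - F(x*)]/δ⌉`. -/
theorem statement17 {n : ℕ} (lam : Fin n → ℝ)
    (hlam : ∀ i, 0 ≤ lam i) (hlam_pos : ∃ i, 0 < lam i)
    (f : EuclideanSpace ℝ (Fin n) → ℝ)
    (g : EuclideanSpace ℝ (Fin n) → EuclideanSpace ℝ (Fin n))
    (hgrad : ∀ x, HasGradientAt f (g x) x)
    (L : Fin n → ℝ) (hL : ∀ i, 0 < L i)
    (hLip : ∀ (i : Fin n) (x : EuclideanSpace ℝ (Fin n)) (t : ℝ),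
      |g (x + EuclideanSpace.single i t) i - g x i| ≤ L i * |t|)
    -- strong convexity of `f` with parameter `σ`
    (σ : ℝ) (hσ : 0 < σ)
    (hstrong : ∀ x y : EuclideanSpace ℝ (Fin n),
      f x + ⟪g x, y - x⟫ + σ / 2 * ‖y - x‖ ^ 2 ≤ f y)
    (u : Fin n → ℝ → EuclideanSpace ℝ (Fin n) → ℝ)
    (gu : Fin n → ℝ → EuclideanSpace ℝ (Fin n) → ℝ)
    (M μ : Fin n → ℝ)
    (hu : ScalarApproxAssumption f g L u gu M μ)
    (T : Fin n → EuclideanSpace ℝ (Fin n) → ℝ)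
    (hT : ∀ (i : Fin n) (x : EuclideanSpace ℝ (Fin n)) (y : ℝ),
      u i (T i x) x + lam i * (if T i x ≠ 0 then (1:ℝ) else 0)
        ≤ u i y x + lam i * (if y ≠ 0 then (1:ℝ) else 0))
    -- probability space and i.i.d. uniform coordinate selections
    {Ω : Type*} [MeasurableSpace Ω] (P : Measure Ω) [IsProbabilityMeasure P]
    (ik : ℕ → Ω → Fin n) (hmeas : ∀ k, Measurable (ik k))
    (hindep : ProbabilityTheory.iIndepFun ik P)
    (hunif : ∀ (k : ℕ) (i : Fin n), P {ω | ik k ω = i} = (n : ENNReal)⁻¹)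
    -- the (RCD-IHT) process
    (x0 : EuclideanSpace ℝ (Fin n)) (X : ℕ → Ω → EuclideanSpace ℝ (Fin n))
    (hX0 : ∀ ω, X 0 ω = x0)
    (hXstep : ∀ (k : ℕ) (ω : Ω), X (k + 1) ω = stepS T (ik k ω) (X k ω))
    (hXmeas : ∀ k, Measurable (X k))
    -- the number of changes in expectation of `Iᵏ`
    (κ : Ω → ℕ) (hκ : ∀ ω, κ ω = Set.ncard {k : ℕ | chgS lam T (X k ω)})
    (hκmeas : Measurable κ)
    -- a limit point `x*` of the sequence
    (xstar : Ω → EuclideanSpace ℝ (Fin n)) (hxstarmeas : Measurable xstar)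
    (hxstar : ∀ᵐ ω ∂P, MapClusterPt (xstar ω) atTop (fun k => X k ω))
    (δ : ℝ)
    (hδ : δ = (1 / n : ℝ) * sInf
      ({t : ℝ | ∃ i, 0 < lam i ∧ t = μ i * lam i / M i} ∪
       {t : ℝ | ∃ j, x0 j ≠ 0 ∧ t = μ j / 2 * (x0 j) ^ 2})) :
    δ * ∫ ω, (κ ω : ℝ) ∂P ≤
        ∫ ω, ((f x0 + l0s lam x0) - (f (xstar ω) + l0s lam (xstar ω))) ∂P ∧
    ∫ ω, (κ ω : ℝ) ∂P ≤
      (⌈(∫ ω, ((f x0 + l0s lam x0) - (f (xstar ω) + l0s lam (xstar ω))) ∂P) / δ⌉₊ : ℝ) :=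
  statement17_general lam hlam hlam_pos f g hgrad L hL σ hσ hstrong u gu M μ hu T hT P ik hmeas
    hindep hunif x0 X hX0 hXstep κ hκ hκmeas xstar hxstarmeas hxstar δ hδ
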